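/- Let p be an odd prime and G a finite p-group. Then for all i ≥ 0, the iterated commutator [η_i(G), G, G, ..., G] (with G appearing i times) is contained in η_i(G)^p. -/

import Mathlib

/-- The subgroup generated by `p`-th powers of elements of `N`. -/
def pPow {G : Type*} [Group G] (p : ℕ) (N : Subgroup G) : Subgroup G :=
  Subgroup.closure ((fun x => x ^ p) '' (N : Set G))

theorem pPow_normal {G : Type*} [Group G] (p : ℕ) {N : Subgroup G} (hN : N.Normal) :
    (pPow p N).Normal := by
  constructor
  intro x hx g
  have h : pPow p N ≤ Subgroup.comap (MulAut.conj g).toMonoidHom (pPow p N) := by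
    rw [pPow, Subgroup.closure_le]
    rintro - ⟨n, hn, rfl⟩
    have : (MulAut.conj g) (n ^ p) = (g * n * g⁻¹) ^ p := by
      simp [MulAut.conj_apply, conj_pow]
    refine Subgroup.mem_comap.2 ?_
    show (MulAut.conj g) (n ^ p) ∈ _
    rw [this]
    exact Subgroup.subset_closure ⟨g * n * g⁻¹, hN.conj_mem n hn g, rfl⟩
  simpa using h hx

theorem normal_sSup {G : Type*} [Group G] {S : Set (Subgroup G)}
    (hS : ∀ N ∈ S, N.Normal) : (sSup S).Normal := by
  constructor
  intro x hx g
  have h : sSup S ≤ Subgroup.comap (MulAut.conj g).toMonoidHom (sSup S) := by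
    refine sSup_le fun N hN => le_trans ?_ (Subgroup.comap_mono (le_sSup hN))
    intro n hn
    exact Subgroup.mem_comap.2 (by simpa using (hS N hN).conj_mem n hn g)
  simpa using h hx

/-- The upper η-series: `η₀ = 1`, and `η_{i+1}/η_i = η(G/η_i)` is the product of all
powerfully embedded subgroups of `G/η_i`. -/
def etaUp (p : ℕ) (G : Type*) [Group G] : ℕ → Subgroup G
  | 0 => ⊥
  | i + 1 => sSup {N : Subgroup G | N.Normal ∧ ⁅N, (⊤ : Subgroup G)⁆ ≤ pPow p N ⊔ etaUp p G i}

instance etaUp_normal (p : ℕ) (G : Type*) [Group G] (i : ℕ) : (etaUp p G i).Normal := by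
  cases i with
  | zero => show (⊥ : Subgroup G).Normal; infer_instance
  | succ i => exact normal_sSup fun N hN => hN.1

/-- The powerful class of `G`. -/
noncomputable def pwc (p : ℕ) (G : Type*) [Group G] : ℕ := sInf {k | etaUp p G k = ⊤}

/-- Iterated commutator `[N, G, G, ..., G]` with `i` copies of `G`. -/
def itComm {G : Type*} [Group G] (N : Subgroup G) : ℕ → Subgroup G
  | 0 => N
  | i + 1 => ⁅itComm N i, (⊤ : Subgroup G)⁆

/-- `N` is PF-embedded in `G`: it admits a potent filtration. -/
def PFEmbedded {G : Type*} [Group G] (p : ℕ) (N : Subgroup G) : Prop :=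
  ∃ (s : ℕ) (M : ℕ → Subgroup G), M 0 = N ∧ M s = ⊥ ∧
    (∀ i, M (i + 1) ≤ M i) ∧ (∀ i, (M i).Normal) ∧
    (∀ i, ⁅M i, (⊤ : Subgroup G)⁆ ≤ M (i + 1)) ∧
    (∀ i, itComm (M i) (p - 1) ≤ pPow p (M (i + 1)))

/-!
Induction on `i`. Writing `E = η_{i+1}` and `F = η_i`, the defining property of `E` gives
`[E, G] ≤ E^p F`; as `E^p` is normal, commutating `i` more times yields
`[E, _{i+1} G] ≤ E^p [F, _i G] ≤ E^p F^p = E^p`.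
-/

open Subgroup

section

variable {G : Type*} [Group G]

lemma pPow_mono (p : ℕ) {N M : Subgroup G} (h : N ≤ M) : pPow p N ≤ pPow p M :=
  closure_mono (Set.image_mono h)

lemma commutator_top_le_iff_le_upperCentralSeriesStep {H N : Subgroup G} [N.Normal] :
    ⁅H, ⊤⁆ ≤ N ↔ H ≤ Subgroup.upperCentralSeriesStep N := by
  simp only [commutator_le, mem_top, forall_const]
  rfl

lemma commutator_sup_top_le {A B N : Subgroup G} [N.Normal] (hA : ⁅A, ⊤⁆ ≤ N)
    (hB : ⁅B, ⊤⁆ ≤ N) : ⁅A ⊔ B, ⊤⁆ ≤ N := by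
  rw [commutator_top_le_iff_le_upperCentralSeriesStep] at *
  exact sup_le hA hB

lemma commutator_sSup_top_le {S : Set (Subgroup G)} {N : Subgroup G} [N.Normal]
    (h : ∀ H ∈ S, ⁅H, ⊤⁆ ≤ N) : ⁅sSup S, ⊤⁆ ≤ N :=
  commutator_top_le_iff_le_upperCentralSeriesStep.2 <|
    sSup_le fun H hH => commutator_top_le_iff_le_upperCentralSeriesStep.1 (h H hH)

instance itComm_normal (N : Subgroup G) [N.Normal] (j : ℕ) : (itComm N j).Normal := by
  induction j with
  | zero => assumption
  | succ j ih => exact commutator_normal _ _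

lemma itComm_mono {H K : Subgroup G} (h : H ≤ K) (j : ℕ) : itComm H j ≤ itComm K j := by
  induction j with
  | zero => exact h
  | succ j ih => exact commutator_mono ih le_rfl

lemma itComm_succ' (H : Subgroup G) (j : ℕ) : itComm H (j + 1) = itComm ⁅H, ⊤⁆ j := by
  induction j with
  | zero => rfl
  | succ j ih => exact congrArg (⁅·, ⊤⁆) ih

lemma itComm_sup_le (X F : Subgroup G) [X.Normal] [F.Normal] (j : ℕ) :
    itComm (X ⊔ F) j ≤ X ⊔ itComm F j := by
  induction j with
  | zero => rfl
  | succ j ih =>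
    calc ⁅itComm (X ⊔ F) j, ⊤⁆ ≤ ⁅X ⊔ itComm F j, ⊤⁆ := commutator_mono ih le_rfl
      _ ≤ X ⊔ itComm F (j + 1) :=
        commutator_sup_top_le (commutator_le_left X ⊤ |>.trans le_sup_left) le_sup_right

lemma etaUp_le_etaUp_succ (p i : ℕ) : etaUp p G i ≤ etaUp p G (i + 1) :=
  le_sSup ⟨etaUp_normal p G i, (commutator_le_left _ _).trans le_sup_right⟩

lemma commutator_etaUp_succ_le (p i : ℕ) :
    ⁅etaUp p G (i + 1), ⊤⁆ ≤ pPow p (etaUp p G (i + 1)) ⊔ etaUp p G i := by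
  have := pPow_normal p (etaUp_normal p G (i + 1))
  exact commutator_sSup_top_le fun N hN =>
    hN.2.trans (sup_le_sup_right (pPow_mono p (le_sSup hN)) _)

end

theorem itComm_etaUp_le_pPow_general {p : ℕ}
    {G : Type*} [Group G] (i : ℕ) :
    itComm (etaUp p G i) i ≤ pPow p (etaUp p G i) := by
  induction i with
  | zero => exact bot_le
  | succ i ih =>
    set E := etaUp p G (i + 1)
    set F := etaUp p G i
    have := pPow_normal p (etaUp_normal p G (i + 1))
    calc itComm E (i + 1) = itComm ⁅E, ⊤⁆ i := itComm_succ' E i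
      _ ≤ itComm (pPow p E ⊔ F) i := itComm_mono (commutator_etaUp_succ_le p i) i
      _ ≤ pPow p E ⊔ itComm F i := itComm_sup_le _ _ i
      _ ≤ pPow p E ⊔ pPow p F := sup_le_sup_left ih _
      _ ≤ pPow p E := sup_le le_rfl (pPow_mono p (etaUp_le_etaUp_succ p i))

/-- `[η_i(G), G, …, G]` (with `i` copies of `G`) is contained in `η_i(G)^p`. -/
theorem itComm_etaUp_le_pPow {p : ℕ} (hp : p.Prime) (hodd : Odd p)
    {G : Type*} [Group G] [Finite G] (hG : IsPGroup p G) (i : ℕ) :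
    itComm (etaUp p G i) i ≤ pPow p (etaUp p G i) :=
  itComm_etaUp_le_pPow_general i
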